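/- Let φ_B(s,v) = B(s) × B*(s) + v·B(s) be the ruled surface associated to the dual binormal indicatrix, where B* = β_B × B and N* = β_N × N. Then for all (s,v) with τ(s)²(⟨β_N(s),B(s)⟩ − v)² + τ*(s)² ≠ 0, the point φ_B(s,v) is a regular point of φ_B and its Gaussian curvature is K_B(s,v) = −τ(s)²τ*(s)² / (τ(s)²(⟨β_N(s),B(s)⟩ − v)² + τ*(s)²)². -/

import Mathlib

open Matrix

noncomputable section

/-- Cross product on ℝ³ (as `Fin 3 → ℝ`). -/
def cross3 (a b : Fin 3 → ℝ) : Fin 3 → ℝ := crossProduct a b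

/-- Euclidean norm on ℝ³ (as `Fin 3 → ℝ`). -/
noncomputable def enorm3 (a : Fin 3 → ℝ) : ℝ := Real.sqrt (a ⬝ᵥ a)

/-- A dual Frenet apparatus: smooth maps `T, N, B, T*, N*, B* : ℝ → ℝ³` and smooth
functions `κ, τ, κ*, τ* : ℝ → ℝ` such that `{T, N, B}` is orthonormal with `B = T × N`,
the real Frenet equations hold, and the dual-part Frenet equations hold. -/
structure DualFrenetApparatus where
  T : ℝ → Fin 3 → ℝ
  N : ℝ → Fin 3 → ℝ
  B : ℝ → Fin 3 → ℝ
  Tstar : ℝ → Fin 3 → ℝ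
  Nstar : ℝ → Fin 3 → ℝ
  Bstar : ℝ → Fin 3 → ℝ
  kappa : ℝ → ℝ
  tau : ℝ → ℝ
  kappaStar : ℝ → ℝ
  tauStar : ℝ → ℝ
  smooth_T : ContDiff ℝ (⊤ : ℕ∞) T
  smooth_N : ContDiff ℝ (⊤ : ℕ∞) N
  smooth_B : ContDiff ℝ (⊤ : ℕ∞) B
  smooth_Tstar : ContDiff ℝ (⊤ : ℕ∞) Tstar
  smooth_Nstar : ContDiff ℝ (⊤ : ℕ∞) Nstar
  smooth_Bstar : ContDiff ℝ (⊤ : ℕ∞) Bstar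
  smooth_kappa : ContDiff ℝ (⊤ : ℕ∞) kappa
  smooth_tau : ContDiff ℝ (⊤ : ℕ∞) tau
  smooth_kappaStar : ContDiff ℝ (⊤ : ℕ∞) kappaStar
  smooth_tauStar : ContDiff ℝ (⊤ : ℕ∞) tauStar
  unit_T : ∀ s, T s ⬝ᵥ T s = 1
  unit_N : ∀ s, N s ⬝ᵥ N s = 1
  unit_B : ∀ s, B s ⬝ᵥ B s = 1
  orth_TN : ∀ s, T s ⬝ᵥ N s = 0
  orth_TB : ∀ s, T s ⬝ᵥ B s = 0
  orth_NB : ∀ s, N s ⬝ᵥ B s = 0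
  B_eq : ∀ s, B s = cross3 (T s) (N s)
  frenet_T : ∀ s, deriv T s = kappa s • N s
  frenet_N : ∀ s, deriv N s = (-(kappa s)) • T s + tau s • B s
  frenet_B : ∀ s, deriv B s = (-(tau s)) • N s
  frenet_Tstar : ∀ s, deriv Tstar s = kappa s • Nstar s + kappaStar s • N s
  frenet_Nstar : ∀ s, deriv Nstar s =
    (-(kappa s)) • Tstar s + (-(kappaStar s)) • T s + tau s • Bstar s + tauStar s • B s
  frenet_Bstar : ∀ s, deriv Bstar s = (-(tau s)) • Nstar s + (-(tauStar s)) • N s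

/-- Partial derivative of a parametrized surface with respect to the first parameter. -/
noncomputable def phiS (φ : ℝ → ℝ → Fin 3 → ℝ) (s v : ℝ) : Fin 3 → ℝ :=
  deriv (fun t => φ t v) s

/-- Partial derivative with respect to the second parameter. -/
noncomputable def phiV (φ : ℝ → ℝ → Fin 3 → ℝ) (s v : ℝ) : Fin 3 → ℝ :=
  deriv (φ s) v

noncomputable def phiSS (φ : ℝ → ℝ → Fin 3 → ℝ) (s v : ℝ) : Fin 3 → ℝ :=
  deriv (fun t => phiS φ t v) s

noncomputable def phiSV (φ : ℝ → ℝ → Fin 3 → ℝ) (s v : ℝ) : Fin 3 → ℝ :=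
  deriv (fun w => phiS φ s w) v

noncomputable def phiVV (φ : ℝ → ℝ → Fin 3 → ℝ) (s v : ℝ) : Fin 3 → ℝ :=
  deriv (fun w => phiV φ s w) v

/-- `(s, v)` is a regular point of `φ` if `φ_s × φ_v ≠ 0` there. -/
def IsRegularPoint (φ : ℝ → ℝ → Fin 3 → ℝ) (s v : ℝ) : Prop :=
  cross3 (phiS φ s v) (phiV φ s v) ≠ 0

/-- The unit normal `n = (φ_v × φ_s) / ‖φ_v × φ_s‖`. -/
noncomputable def unitNormal (φ : ℝ → ℝ → Fin 3 → ℝ) (s v : ℝ) : Fin 3 → ℝ :=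
  (enorm3 (cross3 (phiV φ s v) (phiS φ s v)))⁻¹ • cross3 (phiV φ s v) (phiS φ s v)

/-- Gaussian curvature `K = (eg − f²)/(EG − F²)`. -/
noncomputable def GaussK (φ : ℝ → ℝ → Fin 3 → ℝ) (s v : ℝ) : ℝ :=
  (phiSS φ s v ⬝ᵥ unitNormal φ s v * (phiVV φ s v ⬝ᵥ unitNormal φ s v) -
      (phiSV φ s v ⬝ᵥ unitNormal φ s v) ^ 2) /
    (phiS φ s v ⬝ᵥ phiS φ s v * (phiV φ s v ⬝ᵥ phiV φ s v) -
      (phiS φ s v ⬝ᵥ phiV φ s v) ^ 2)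

/-- Mean curvature (trace of the shape operator) `H = (eG − 2fF + gE)/(EG − F²)`. -/
noncomputable def MeanH (φ : ℝ → ℝ → Fin 3 → ℝ) (s v : ℝ) : ℝ :=
  (phiSS φ s v ⬝ᵥ unitNormal φ s v * (phiV φ s v ⬝ᵥ phiV φ s v) -
      2 * (phiSV φ s v ⬝ᵥ unitNormal φ s v) * (phiS φ s v ⬝ᵥ phiV φ s v) +
      phiVV φ s v ⬝ᵥ unitNormal φ s v * (phiS φ s v ⬝ᵥ phiS φ s v)) /
    (phiS φ s v ⬝ᵥ phiS φ s v * (phiV φ s v ⬝ᵥ phiV φ s v) -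
      (phiS φ s v ⬝ᵥ phiV φ s v) ^ 2)

/-- The ruled surface `φ_X(s,v) = X(s) × X*(s) + v·X(s)`. -/
noncomputable def ruled (X Xstar : ℝ → Fin 3 → ℝ) : ℝ → ℝ → Fin 3 → ℝ :=
  fun s v => cross3 (X s) (Xstar s) + v • X s

-- AUX
lemma cross3_add_left (a b c : Fin 3 → ℝ) : cross3 (a + b) c = cross3 a c + cross3 b c := by
  simp [cross3]
lemma cross3_smul_left (r : ℝ) (a c : Fin 3 → ℝ) : cross3 (r • a) c = r • cross3 a c := by
  simp [cross3]
lemma cross3_add_right (a b c : Fin 3 → ℝ) : cross3 a (b + c) = cross3 a b + cross3 a c := by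
  simp [cross3]
lemma cross3_smul_right (r : ℝ) (a c : Fin 3 → ℝ) : cross3 a (r • c) = r • cross3 a c := by
  simp [cross3]
lemma cross3_self (a : Fin 3 → ℝ) : cross3 a a = 0 := by
  simp [cross3, cross_self]
lemma cross3_triple (a b c : Fin 3 → ℝ) :
    cross3 a (cross3 b c) = (a ⬝ᵥ c) • b - (a ⬝ᵥ b) • c := by
  funext i
  fin_cases i <;>
    simp [cross3, cross_apply, dotProduct, Fin.sum_univ_three] <;> ring
lemma cross3_triple' (a b c : Fin 3 → ℝ) :
    cross3 (cross3 a b) c = (c ⬝ᵥ a) • b - (c ⬝ᵥ b) • a := by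
  funext i
  fin_cases i <;>
    simp [cross3, cross_apply, dotProduct, Fin.sum_univ_three] <;> ring

lemma HasDerivAt.cross3' {f g : ℝ → Fin 3 → ℝ} {f' g' : Fin 3 → ℝ} {x : ℝ}
    (hf : HasDerivAt f f' x) (hg : HasDerivAt g g' x) :
    HasDerivAt (fun t => cross3 (f t) (g t)) (cross3 f' (g x) + cross3 (f x) g') x := by
  rw [hasDerivAt_pi] at hf hg ⊢
  intro i
  fin_cases i
  · convert (((hf 1).mul (hg 2)).sub ((hf 2).mul (hg 1))) using 1
    · rfl
    simp [cross3, cross_apply]; ring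
  · convert (((hf 2).mul (hg 0)).sub ((hf 0).mul (hg 2))) using 1
    · rfl
    simp [cross3, cross_apply]; ring
  · convert (((hf 0).mul (hg 1)).sub ((hf 1).mul (hg 0))) using 1
    · rfl
    simp [cross3, cross_apply]; ring

/-- The ruled surface associated to the dual binormal indicatrix is regular wherever
`τ²(⟨β_N,B⟩ − v)² + τ*² ≠ 0`, and its Gaussian curvature there is
`K_B = −τ²τ*² / (τ²(⟨β_N,B⟩ − v)² + τ*²)²` (equation (5)). -/
theorem gauss_curvature_binormal_indicatrix (F : DualFrenetApparatus)
    (βN βB : ℝ → Fin 3 → ℝ)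
    (hβN : ContDiff ℝ (⊤ : ℕ∞) βN) (hβB : ContDiff ℝ (⊤ : ℕ∞) βB)
    (hNstar : ∀ s, F.Nstar s = cross3 (βN s) (F.N s))
    (hBstar : ∀ s, F.Bstar s = cross3 (βB s) (F.B s)) :
    ∀ s v : ℝ,
      F.tau s ^ 2 * (βN s ⬝ᵥ F.B s - v) ^ 2 + F.tauStar s ^ 2 ≠ 0 →
      IsRegularPoint (ruled F.B F.Bstar) s v ∧
      GaussK (ruled F.B F.Bstar) s v =
        -(F.tau s ^ 2 * F.tauStar s ^ 2) /
          (F.tau s ^ 2 * (βN s ⬝ᵥ F.B s - v) ^ 2 + F.tauStar s ^ 2) ^ 2 := by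
  intro s v hD
  set φ := ruled F.B F.Bstar with hφdef
  have hBdiff : Differentiable ℝ F.B := F.smooth_B.differentiable (by simp)
  have hBsdiff : Differentiable ℝ F.Bstar := F.smooth_Bstar.differentiable (by simp)
  have hB : ∀ t, HasDerivAt F.B ((-(F.tau t)) • F.N t) t := fun t =>
    F.frenet_B t ▸ (hBdiff t).hasDerivAt
  have hBs : ∀ t, HasDerivAt F.Bstar
      ((-(F.tau t)) • F.Nstar t + (-(F.tauStar t)) • F.N t) t := fun t =>
    F.frenet_Bstar t ▸ (hBsdiff t).hasDerivAt
  have key : ∀ t w, HasDerivAt (fun z => φ z w)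
      ((cross3 ((-(F.tau t)) • F.N t) (F.Bstar t) +
        cross3 (F.B t) ((-(F.tau t)) • F.Nstar t + (-(F.tauStar t)) • F.N t)) +
        w • ((-(F.tau t)) • F.N t)) t := by
    intro t w
    have h1 := (hB t).cross3' (hBs t)
    have h2 := (hB t).const_smul w
    exact h1.add h2
  have hphiS : ∀ t w, phiS φ t w =
      (cross3 ((-(F.tau t)) • F.N t) (F.Bstar t) +
        cross3 (F.B t) ((-(F.tau t)) • F.Nstar t + (-(F.tauStar t)) • F.N t)) +
        w • ((-(F.tau t)) • F.N t) := fun t w => (key t w).deriv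
  have hphiV : ∀ t w, phiV φ t w = F.B t := by
    intro t w
    have h : HasDerivAt (fun z : ℝ => cross3 (F.B t) (F.Bstar t) + z • F.B t) (F.B t) w := by
      have h1 := (hasDerivAt_id w).smul_const (F.B t)
      simpa using h1.const_add (cross3 (F.B t) (F.Bstar t))
    exact h.deriv
  have hVV : phiVV φ s v = 0 := by
    have he : (fun w => phiV φ s w) = fun _ => F.B s := funext (hphiV s)
    rw [phiVV, he]
    exact deriv_const v _
  have hSV : phiSV φ s v = (-(F.tau s)) • F.N s := by
    have he : (fun w => phiS φ s w) = fun w =>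
        (cross3 ((-(F.tau s)) • F.N s) (F.Bstar s) +
          cross3 (F.B s) ((-(F.tau s)) • F.Nstar s + (-(F.tauStar s)) • F.N s)) +
          w • ((-(F.tau s)) • F.N s) := funext (hphiS s)
    rw [phiSV, he]
    have h : HasDerivAt (fun w : ℝ =>
        (cross3 ((-(F.tau s)) • F.N s) (F.Bstar s) +
          cross3 (F.B s) ((-(F.tau s)) • F.Nstar s + (-(F.tauStar s)) • F.N s)) +
          w • ((-(F.tau s)) • F.N s)) ((-(F.tau s)) • F.N s) v := by
      have h1 := (hasDerivAt_id v).smul_const ((-(F.tau s)) • F.N s)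
      simpa using h1.const_add (cross3 ((-(F.tau s)) • F.N s) (F.Bstar s) +
          cross3 (F.B s) ((-(F.tau s)) • F.Nstar s + (-(F.tauStar s)) • F.N s))
    exact h.deriv
  -- orthonormal dot facts
  have hNT : F.N s ⬝ᵥ F.T s = 0 := by rw [dotProduct_comm]; exact F.orth_TN s
  have hBT : F.B s ⬝ᵥ F.T s = 0 := by rw [dotProduct_comm]; exact F.orth_TB s
  have hBN : F.B s ⬝ᵥ F.N s = 0 := by rw [dotProduct_comm]; exact F.orth_NB s
  -- cross product facts
  have hcBN : cross3 (F.B s) (F.N s) = -(F.T s) := by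
    rw [F.B_eq s, cross3_triple', hNT, F.unit_N s]
    module
  have hcBT : cross3 (F.B s) (F.T s) = F.N s := by
    rw [F.B_eq s, cross3_triple', F.unit_T s, F.orth_TN s]
    module
  have hcTB : cross3 (F.T s) (F.B s) = -(F.N s) := by
    rw [F.B_eq s, cross3_triple, F.orth_TN s, F.unit_T s]
    module
  have hcNB : cross3 (F.N s) (F.B s) = F.T s := by
    rw [F.B_eq s, cross3_triple, F.unit_N s, hNT]
    module
  -- explicit phiS
  have hS : phiS φ s v =
      F.tauStar s • F.T s + (F.tau s * (βN s ⬝ᵥ F.B s - v)) • F.N s +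
        (F.tau s * (βB s ⬝ᵥ F.N s)) • F.B s := by
    rw [hphiS s v, hBstar s, hNstar s, cross3_smul_left,
      cross3_triple (F.N s) (βB s) (F.B s), cross3_add_right, cross3_smul_right,
      cross3_smul_right, cross3_triple (F.B s) (βN s) (F.N s), hcBN,
      F.orth_NB s, hBN, dotProduct_comm (F.N s) (βB s), dotProduct_comm (F.B s) (βN s)]
    module
  have hV : phiV φ s v = F.B s := hphiV s v
  -- cross products of partials
  have hcSV : cross3 (phiS φ s v) (phiV φ s v) =
      (F.tau s * (βN s ⬝ᵥ F.B s - v)) • F.T s + (-(F.tauStar s)) • F.N s := by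
    rw [hS, hV]
    simp only [cross3_add_left, cross3_smul_left, hcTB, hcNB, cross3_self, smul_zero]
    module
  have hcVS : cross3 (phiV φ s v) (phiS φ s v) =
      F.tauStar s • F.N s + (-(F.tau s * (βN s ⬝ᵥ F.B s - v))) • F.T s := by
    rw [hS, hV]
    simp only [cross3_add_right, cross3_smul_right, hcBT, hcBN, cross3_self, smul_zero]
    module
  have hDpos : 0 < F.tau s ^ 2 * (βN s ⬝ᵥ F.B s - v) ^ 2 + F.tauStar s ^ 2 :=
    lt_of_le_of_ne (by positivity) (Ne.symm hD)
  constructor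
  · show cross3 (phiS φ s v) (phiV φ s v) ≠ 0
    rw [hcSV]
    intro h0
    apply hD
    have hdd : ((F.tau s * (βN s ⬝ᵥ F.B s - v)) • F.T s + (-(F.tauStar s)) • F.N s) ⬝ᵥ
        ((F.tau s * (βN s ⬝ᵥ F.B s - v)) • F.T s + (-(F.tauStar s)) • F.N s) = 0 := by
      rw [h0]; simp
    simp only [add_dotProduct, dotProduct_add, smul_dotProduct, dotProduct_smul,
      F.unit_T s, F.unit_N s, F.orth_TN s, hNT, smul_eq_mul] at hdd
    nlinarith [hdd]
  · have hnorm : enorm3 (cross3 (phiV φ s v) (phiS φ s v)) =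
        Real.sqrt (F.tau s ^ 2 * (βN s ⬝ᵥ F.B s - v) ^ 2 + F.tauStar s ^ 2) := by
      rw [hcVS, enorm3]
      congr 1
      simp only [add_dotProduct, dotProduct_add, smul_dotProduct, dotProduct_smul,
        F.unit_T s, F.unit_N s, F.orth_TN s, hNT, smul_eq_mul]
      ring
    have hf : phiSV φ s v ⬝ᵥ unitNormal φ s v =
        -(F.tau s) * F.tauStar s *
          (Real.sqrt (F.tau s ^ 2 * (βN s ⬝ᵥ F.B s - v) ^ 2 + F.tauStar s ^ 2))⁻¹ := by
      rw [unitNormal, hnorm, hSV, hcVS]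
      simp only [dotProduct_smul, dotProduct_add, smul_dotProduct,
        F.unit_T s, F.unit_N s, F.orth_TN s, hNT, smul_eq_mul]
      ring
    have hE : phiS φ s v ⬝ᵥ phiS φ s v =
        F.tauStar s ^ 2 + (F.tau s * (βN s ⬝ᵥ F.B s - v)) ^ 2 +
          (F.tau s * (βB s ⬝ᵥ F.N s)) ^ 2 := by
      rw [hS]
      simp only [add_dotProduct, dotProduct_add, smul_dotProduct, dotProduct_smul,
        F.unit_T s, F.unit_N s, F.unit_B s, F.orth_TN s, F.orth_TB s, F.orth_NB s,
        hNT, hBT, hBN, smul_eq_mul]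
      ring
    have hFdot : phiS φ s v ⬝ᵥ phiV φ s v = F.tau s * (βB s ⬝ᵥ F.N s) := by
      rw [hS, hV]
      simp only [add_dotProduct, smul_dotProduct, F.unit_B s, F.orth_TB s,
        F.orth_NB s, smul_eq_mul]
      ring
    have hGdot : phiV φ s v ⬝ᵥ phiV φ s v = 1 := by rw [hV]; exact F.unit_B s
    rw [GaussK, hVV, zero_dotProduct, mul_zero, zero_sub, hf, hE, hFdot, hGdot]
    have hr2 : Real.sqrt (F.tau s ^ 2 * (βN s ⬝ᵥ F.B s - v) ^ 2 + F.tauStar s ^ 2) ^ 2 =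
        F.tau s ^ 2 * (βN s ⬝ᵥ F.B s - v) ^ 2 + F.tauStar s ^ 2 :=
      Real.sq_sqrt hDpos.le
    have hrne : Real.sqrt (F.tau s ^ 2 * (βN s ⬝ᵥ F.B s - v) ^ 2 + F.tauStar s ^ 2) ≠ 0 :=
      ne_of_gt (Real.sqrt_pos.mpr hDpos)
    rw [mul_one]
    have hden2 : F.tauStar s ^ 2 + (F.tau s * (βN s ⬝ᵥ F.B s - v)) ^ 2 +
        (F.tau s * (βB s ⬝ᵥ F.N s)) ^ 2 - (F.tau s * (βB s ⬝ᵥ F.N s)) ^ 2 =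
        F.tau s ^ 2 * (βN s ⬝ᵥ F.B s - v) ^ 2 + F.tauStar s ^ 2 := by ring
    rw [hden2]
    have hnum : (-F.tau s * F.tauStar s *
        (Real.sqrt (F.tau s ^ 2 * (βN s ⬝ᵥ F.B s - v) ^ 2 + F.tauStar s ^ 2))⁻¹) ^ 2 =
        F.tau s ^ 2 * F.tauStar s ^ 2 *
          (F.tau s ^ 2 * (βN s ⬝ᵥ F.B s - v) ^ 2 + F.tauStar s ^ 2)⁻¹ := by
      rw [mul_pow, mul_pow, inv_pow, hr2]; ring
    rw [hnum, ← div_eq_mul_inv, ← neg_div, div_div, ← pow_two]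


end
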